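/- Let n be a positive integer. Then, as an identity of rational numbers, ∑_{m=0}^{n-1} (3m+1)·(-16)^{n-m-1}·C(2m,m)·f_m = ∑_{k=0}^{n-1} C(2n,n)·C(n+2k,3k)·C(3k,k)·C(2k,k)·n·(k-n)·(-4)^{n-k} / (8·(2k+1)). -/

import Mathlib

/-!
Both sides `u n` satisfy `u (n + 1) = -16 * u n + (3n + 1) C(2n, n) f_n` and vanish at `n = 0`.
For the right-hand side this follows termwise from
`T(n + 1, k) + 16 T(n, k) = (3n + 1) C(2n, n) C(n + 2k, 3k) C(3k, k) C(2k, k) (-4)^(n - k)`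
together with the formula `f_n = ∑_k C(n + 2k, 3k) C(3k, k) C(2k, k) (-4)^(n - k)`.
The latter holds because both sides satisfy the Franel recurrence
`(n + 2)² f_(n + 2) = (7n² + 21n + 16) f_(n + 1) + 8 (n + 1)² f_n` with the same initial values;
each instance of the recurrence is proved by creative telescoping, with certificates as produced by
Zeilberger's algorithm.
-/

/-- The Franel numbers: `f n = ∑_{k=0}^n C(n,k)^3`. -/
def franel (n : ℕ) : ℕ := ∑ k ∈ Finset.range (n + 1), (n.choose k) ^ 3

open Finset

theorem cast_choose_eq_of_add_one_eq {m m' : ℕ} (h : m + 1 = m') (k : ℕ) :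
    (m.choose k : ℚ) = ((m' : ℚ) - k) * m'.choose k / m' := by
  subst h
  rw [eq_div_iff (by positivity)]
  rcases le_or_gt k (m + 1) with hk | hk
  · have h := congrArg (Nat.cast : ℕ → ℚ) (Nat.choose_mul_succ_eq m k)
    push_cast [Nat.cast_sub hk] at h ⊢
    linear_combination h
  · simp [Nat.choose_eq_zero_of_lt hk, Nat.choose_eq_zero_of_lt (show m < k by omega)]

theorem cast_choose_succ_right (m k : ℕ) :
    (m.choose (k + 1) : ℚ) = ((m : ℚ) - k) * m.choose k / (k + 1) := by
  rw [eq_div_iff (by positivity)]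
  rcases le_or_gt k m with hk | hk
  · have h := congrArg (Nat.cast : ℕ → ℚ) (Nat.choose_succ_right_eq m k)
    push_cast [Nat.cast_sub hk] at h
    linear_combination h
  · simp [Nat.choose_eq_zero_of_lt hk, Nat.choose_eq_zero_of_lt (show m < k + 1 by omega)]

theorem cast_choose_succ_succ (m k : ℕ) :
    ((m + 1).choose (k + 1) : ℚ) = ((m : ℚ) + 1) * m.choose k / (k + 1) := by
  rw [eq_div_iff (by positivity)]
  have h := congrArg (Nat.cast : ℕ → ℚ) (Nat.add_one_mul_choose_eq m k)
  push_cast at h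
  linear_combination -h

theorem cast_choose_add_two_add_three (m j : ℕ) :
    ((m + 2).choose (j + 3) : ℚ)
      = (m + 2) * (m + 1) * ((m : ℚ) - j) / ((j + 1) * (j + 2) * (j + 3)) * m.choose j := by
  rw [show j + 3 = j + 2 + 1 from rfl, cast_choose_succ_right, show m + 2 = m + 1 + 1 from rfl,
    show j + 2 = j + 1 + 1 from rfl, cast_choose_succ_succ, cast_choose_succ_succ]
  push_cast
  field_simp
  ring

theorem cast_choose_two_mul_succ (k : ℕ) :
    ((2 * (k + 1)).choose (k + 1) : ℚ)
      = (2 * k + 1) * (2 * k + 2) / (k + 1) ^ 2 * (2 * k).choose k := by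
  rw [show 2 * (k + 1) = 2 * k + 1 + 1 by ring, cast_choose_succ_succ,
    cast_choose_eq_of_add_one_eq (m' := 2 * k + 1) rfl k]
  push_cast
  field_simp
  ring

theorem cast_choose_three_mul_succ (k : ℕ) :
    ((3 * (k + 1)).choose (k + 1) : ℚ)
      = (3 * k + 1) * (3 * k + 2) * (3 * k + 3) / ((k + 1) * (2 * k + 1) * (2 * k + 2))
        * (3 * k).choose k := by
  rw [show 3 * (k + 1) = 3 * k + 2 + 1 by ring, cast_choose_succ_succ,
    cast_choose_eq_of_add_one_eq (m' := 3 * k + 1) rfl k,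
    cast_choose_eq_of_add_one_eq (m' := 3 * k + 2) rfl k]
  push_cast
  field_simp
  ring

def FranelRecurrence (u : ℕ → ℚ) : Prop :=
  ∀ n : ℕ, ((n : ℚ) + 2) ^ 2 * u (n + 2)
    = (7 * (n : ℚ) ^ 2 + 21 * n + 16) * u (n + 1) + 8 * ((n : ℚ) + 1) ^ 2 * u n

theorem FranelRecurrence.eq_of_eq_of_eq {u v : ℕ → ℚ} (hu : FranelRecurrence u)
    (hv : FranelRecurrence v) (h₀ : u 0 = v 0) (h₁ : u 1 = v 1) : u = v := by
  have h : ∀ n, u n = v n ∧ u (n + 1) = v (n + 1) := by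
    intro n
    induction n with
    | zero => exact ⟨h₀, h₁⟩
    | succ n ih =>
      refine ⟨ih.2, mul_left_cancel₀ (by positivity : ((n : ℚ) + 2) ^ 2 ≠ 0) ?_⟩
      rw [hu, hv, ih.1, ih.2]
  exact funext fun n ↦ (h n).1

theorem FranelRecurrence.of_telescoping (F G : ℕ → ℕ → ℚ) (hF : ∀ n k, n < k → F n k = 0)
    (hG₀ : ∀ n, G n 0 = 0) (hG : ∀ n, G n (n + 3) = 0)
    (hFG : ∀ n k : ℕ, ((n : ℚ) + 2) ^ 2 * F (n + 2) k
      - (7 * (n : ℚ) ^ 2 + 21 * n + 16) * F (n + 1) k - 8 * ((n : ℚ) + 1) ^ 2 * F n k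
        = G n (k + 1) - G n k) :
    FranelRecurrence fun n ↦ ∑ k ∈ range (n + 1), F n k := by
  intro n
  have hsum := sum_range_sub (G n) (n + 3)
  rw [hG, hG₀, ← sum_congr rfl fun k _ ↦ hFG n k] at hsum
  simp only [sum_sub_distrib, ← mul_sum] at hsum
  have pad : ∀ m, m ≤ n + 2 → ∑ k ∈ range (m + 1), F m k = ∑ k ∈ range (n + 3), F m k :=
    fun m hm ↦ sum_subset (range_subset_range.2 (by omega)) fun k _ hk ↦ hF m k (by simpa using hk)
  simp only
  rw [pad n (by omega), pad (n + 1) (by omega), pad (n + 2) le_rfl]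
  linarith

def franelCertificate (n k : ℕ) : ℚ :=
  (k : ℚ) ^ 3 * ((n + 2).choose k : ℚ) ^ 3 / (((n : ℚ) + 1) ^ 3 * ((n : ℚ) + 2) ^ 3) *
    ((-72 - 272 * n - 402 * n ^ 2 - 290 * n ^ 3 - 102 * n ^ 4 - 14 * n ^ 5)
      + k * (78 + 249 * n + 291 * n ^ 2 + 147 * n ^ 3 + 27 * n ^ 4)
      + k ^ 2 * (-30 - 78 * n - 66 * n ^ 2 - 18 * n ^ 3) + k ^ 3 * (4 + 8 * n + 4 * n ^ 2))

theorem franelCertificate_succ_sub (n k : ℕ) :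
    franelCertificate n (k + 1) - franelCertificate n k
      = ((n : ℚ) + 2) ^ 2 * ((n + 2).choose k : ℚ) ^ 3
        - (7 * (n : ℚ) ^ 2 + 21 * n + 16) * ((n + 1).choose k : ℚ) ^ 3
        - 8 * ((n : ℚ) + 1) ^ 2 * (n.choose k : ℚ) ^ 3 := by
  rw [franelCertificate, franelCertificate, cast_choose_succ_right,
    cast_choose_eq_of_add_one_eq (m' := n + 2) rfl k,
    cast_choose_eq_of_add_one_eq (m := n) (m' := n + 1) rfl k,
    cast_choose_eq_of_add_one_eq (m' := n + 2) rfl k]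
  push_cast
  field_simp
  ring

theorem franelRecurrence_franel : FranelRecurrence fun n ↦ (franel n : ℚ) := by
  have h := FranelRecurrence.of_telescoping (fun n k ↦ (n.choose k : ℚ) ^ 3) franelCertificate
    (fun n k hk ↦ by simp [Nat.choose_eq_zero_of_lt hk]) (fun n ↦ by simp [franelCertificate])
    (fun n ↦ by simp [franelCertificate]) fun n k ↦ (franelCertificate_succ_sub n k).symm
  simpa [franel] using h

-- `(-4) ^ n / (-4) ^ k` rather than `(-4) ^ (n - k)`: no truncated subtraction when `k > n`.
def franelAltTerm (n k : ℕ) : ℚ :=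
  (-4) ^ n * ((n + 2 * k).choose (3 * k) : ℚ) * ((3 * k).choose k : ℚ) * ((2 * k).choose k : ℚ)
    / (-4) ^ k

def franelAltCertificate (n k : ℕ) : ℚ :=
  (-4) ^ n * ((n + 2 + 2 * k).choose (3 * k) : ℚ) * ((3 * k).choose k : ℚ)
    * ((2 * k).choose k : ℚ) * (-48 * (k : ℚ) ^ 3 * (3 * n + 5))
    / ((-4) ^ k * ((n + 2 + 2 * k) * (n + 1 + 2 * k)))

theorem franelAltCertificate_succ_sub (n k : ℕ) :
    franelAltCertificate n (k + 1) - franelAltCertificate n k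
      = ((n : ℚ) + 2) ^ 2 * franelAltTerm (n + 2) k
        - (7 * (n : ℚ) ^ 2 + 21 * n + 16) * franelAltTerm (n + 1) k
        - 8 * ((n : ℚ) + 1) ^ 2 * franelAltTerm n k := by
  simp only [franelAltCertificate, franelAltTerm]
  rw [cast_choose_three_mul_succ, cast_choose_two_mul_succ,
    show n + 2 + 2 * (k + 1) = n + 2 + 2 * k + 2 by ring, show 3 * (k + 1) = 3 * k + 3 by ring,
    cast_choose_add_two_add_three,
    cast_choose_eq_of_add_one_eq (m := n + 2 * k) (m' := n + 1 + 2 * k) (by ring),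
    cast_choose_eq_of_add_one_eq (m := n + 1 + 2 * k) (m' := n + 2 + 2 * k) (by ring)]
  push_cast
  field_simp
  ring

theorem franelRecurrence_sum_franelAltTerm :
    FranelRecurrence fun n ↦ ∑ k ∈ range (n + 1), franelAltTerm n k := by
  refine .of_telescoping franelAltTerm franelAltCertificate
    (fun n k hk ↦ by
      simp [franelAltTerm, Nat.choose_eq_zero_of_lt (show n + 2 * k < 3 * k by omega)])
    (fun n ↦ by simp [franelAltCertificate]) (fun n ↦ ?_)
    fun n k ↦ (franelAltCertificate_succ_sub n k).symm
  have : n + 2 + 2 * (n + 3) < 3 * (n + 3) := by omega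
  simp [franelAltCertificate, Nat.choose_eq_zero_of_lt this]

theorem franel_eq_sum_franelAltTerm (n : ℕ) :
    (franel n : ℚ) = ∑ k ∈ range (n + 1), franelAltTerm n k := by
  refine congrFun
    (franelRecurrence_franel.eq_of_eq_of_eq franelRecurrence_sum_franelAltTerm ?_ ?_) n
  · simp [franel, franelAltTerm]
  · simp [franel, franelAltTerm, sum_range_succ]
    norm_num

def rhsTerm (n k : ℕ) : ℚ :=
  ((2 * n).choose n : ℚ) * ((n + 2 * k).choose (3 * k) : ℚ) *
    ((3 * k).choose k : ℚ) * ((2 * k).choose k : ℚ) * n * ((k : ℚ) - n) *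
    (-4) ^ (n - k) / (8 * (2 * k + 1))

theorem rhsTerm_succ_add (n k : ℕ) (hk : k ≤ n) :
    rhsTerm (n + 1) k + 16 * rhsTerm n k
      = (3 * n + 1) * ((2 * n).choose n : ℚ) * franelAltTerm n k := by
  obtain ⟨d, rfl⟩ := Nat.exists_eq_add_of_le hk
  simp only [rhsTerm, franelAltTerm]
  rw [show k + d + 1 - k = d + 1 by omega, show k + d - k = d by omega, cast_choose_two_mul_succ,
    cast_choose_eq_of_add_one_eq (m := k + d + 2 * k) (m' := k + d + 1 + 2 * k) (by ring), pow_add]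
  push_cast
  field_simp
  ring

theorem sum_rhsTerm_succ (n : ℕ) :
    ∑ k ∈ range (n + 1), rhsTerm (n + 1) k
      = (3 * n + 1) * ((2 * n).choose n : ℚ) * franel n - 16 * ∑ k ∈ range n, rhsTerm n k := by
  have hpad : ∑ k ∈ range n, rhsTerm n k = ∑ k ∈ range (n + 1), rhsTerm n k := by
    simp [sum_range_succ, rhsTerm]
  rw [hpad, franel_eq_sum_franelAltTerm, mul_sum, mul_sum, ← sum_sub_distrib]
  refine sum_congr rfl fun k hk ↦ ?_
  linarith [rhsTerm_succ_add n k (Nat.lt_succ_iff.mp (mem_range.mp hk))]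

theorem sum_weighted_franel_succ (n : ℕ) :
    ∑ m ∈ range (n + 1),
        (3 * m + 1 : ℚ) * (-16) ^ (n + 1 - m - 1) * ((2 * m).choose m : ℚ) * (franel m : ℚ)
      = -16 * ∑ m ∈ range n,
          (3 * m + 1 : ℚ) * (-16) ^ (n - m - 1) * ((2 * m).choose m : ℚ) * (franel m : ℚ)
        + (3 * n + 1) * ((2 * n).choose n : ℚ) * franel n := by
  rw [sum_range_succ, mul_sum, show n + 1 - n - 1 = 0 by omega, pow_zero, mul_one]
  congr 1
  refine sum_congr rfl fun m hm ↦ ?_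
  rw [show n + 1 - m - 1 = n - m - 1 + 1 by have := mem_range.mp hm; omega, pow_succ]
  ring

theorem sum_weighted_franel_eq_sum_rhsTerm (n : ℕ) :
    ∑ m ∈ range n, (3 * m + 1 : ℚ) * (-16) ^ (n - m - 1) * ((2 * m).choose m : ℚ) * (franel m : ℚ)
      = ∑ k ∈ range n, rhsTerm n k := by
  induction n with
  | zero => simp
  | succ n ih => rw [sum_weighted_franel_succ, ih, sum_rhsTerm_succ]; ring

theorem stmt_5_general (n : ℕ) :
    ∑ m ∈ Finset.range n,
        (3 * m + 1 : ℚ) * (-16) ^ (n - m - 1) * ((2 * m).choose m : ℚ) * (franel m : ℚ)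
      = ∑ k ∈ Finset.range n,
          ((2 * n).choose n : ℚ) * ((n + 2 * k).choose (3 * k) : ℚ) *
            ((3 * k).choose k : ℚ) * ((2 * k).choose k : ℚ) * n * ((k : ℚ) - n) *
            (-4) ^ (n - k) / (8 * (2 * k + 1)) :=
  sum_weighted_franel_eq_sum_rhsTerm n

theorem stmt_5 (n : ℕ) (hn : 0 < n) :
    ∑ m ∈ Finset.range n,
        (3 * m + 1 : ℚ) * (-16) ^ (n - m - 1) * ((2 * m).choose m : ℚ) * (franel m : ℚ)
      = ∑ k ∈ Finset.range n,
          ((2 * n).choose n : ℚ) * ((n + 2 * k).choose (3 * k) : ℚ) *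
            ((3 * k).choose k : ℚ) * ((2 * k).choose k : ℚ) * n * ((k : ℚ) - n) *
            (-4) ^ (n - k) / (8 * (2 * k + 1)) :=
  stmt_5_general n
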